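/- arXiv:1610.09783 — 2 statements merged into one kernel-verified Lean document; each statement's English description precedes it below -/
import Mathlib

section
/- Let M be a mixed graph of order n with underlying graph M_U, Hermitian-Randić matrix R_H(M), and p = |det R_H(M)|. Then √(2R_{-1}(M_U) + n(n-1)p^{2/n}) ≤ E_{R_H}(M) ≤ √(2n R_{-1}(M_U)). -/
open Matrix BigOperators

noncomputable section
open scoped Classical

/-- A mixed graph on vertex set `V`, encoded by its Hermitian-adjacency matrix:
entries are `1` for undirected edges, `i`/`-i` for arcs, `0` otherwise. -/
structure MixedGraph (V : Type) [Fintype V] [DecidableEq V] where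
  h : Matrix V V ℂ
  herm : h.IsHermitian
  loopless : ∀ k, h k k = 0
  entries : ∀ k l, h k l = 0 ∨ h k l = 1 ∨ h k l = Complex.I ∨ h k l = -Complex.I

namespace MixedGraph

variable {V : Type} [Fintype V] [DecidableEq V]

/-- Degree of a vertex in the underlying graph. -/
def deg (M : MixedGraph V) (k : V) : ℕ :=
  (Finset.univ.filter fun l => M.h k l ≠ 0).card

/-- The Hermitian–Randić matrix of a mixed graph. -/
def RH (M : MixedGraph V) : Matrix V V ℂ :=
  fun k l => M.h k l / ((Real.sqrt (M.deg k) * Real.sqrt (M.deg l) : ℝ) : ℂ)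

theorem RH_isHermitian (M : MixedGraph V) : (M.RH).IsHermitian := by
  ext k l
  simp only [RH, Matrix.conjTranspose_apply, star_div₀, Complex.star_def,
    Complex.conj_ofReal, M.herm.apply k l, mul_comm (Real.sqrt (M.deg l))]

/-- The Hermitian–Randić energy: sum of absolute values of the eigenvalues of `RH`. -/
def energyRH (M : MixedGraph V) : ℝ := ∑ i, |M.RH_isHermitian.eigenvalues i|

/-- The Hermitian energy: sum of absolute values of the eigenvalues of `H(M)`. -/
def energyH (M : MixedGraph V) : ℝ := ∑ i, |M.herm.eigenvalues i|

/-- The general Randić index `R₋₁` of the underlying graph. -/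
def Rm1 (M : MixedGraph V) : ℝ :=
  (1 / 2) * ∑ k, ∑ l, if M.h k l ≠ 0 then ((M.deg k : ℝ) * (M.deg l : ℝ))⁻¹ else 0

/-- The underlying simple graph of a mixed graph. -/
def underlying (M : MixedGraph V) : SimpleGraph V where
  Adj k l := M.h k l ≠ 0
  symm := by
    constructor
    intro k l hkl h0
    exact hkl (by rw [← M.herm.apply k l, h0, star_zero])
  loopless := ⟨fun k hk => hk (M.loopless k)⟩

end MixedGraph

/-! The eigenvalues `λᵢ` of `R_H(M)` are real, with `∑ λᵢ² = tr R_H(M)² = 2R₋₁(M_U)` and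
`∏ |λᵢ| = |det R_H(M)|`. The upper bound is Cauchy–Schwarz for `∑ |λᵢ|`. For the lower bound,
`(∑ |λᵢ|)²` is `∑ λᵢ²` plus the `n(n-1)` off-diagonal products `|λᵢ||λⱼ|`, whose product is
`p^(2(n-1))`; AM–GM bounds their sum below by `n(n-1) p^(2/n)`. -/

open Finset

namespace Finset

variable {α : Type*}

theorem sum_abs_le_sqrt_card_mul_sum_sq (s : Finset α) (x : α → ℝ) :
    ∑ i ∈ s, |x i| ≤ √(#s * ∑ i ∈ s, x i ^ 2) := by
  rw [Real.le_sqrt (sum_nonneg fun i _ => abs_nonneg (x i)) (by positivity)]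
  simpa only [sq_abs] using sq_sum_le_card_mul_sum_sq (s := s) (f := fun i => |x i|)

variable [DecidableEq α]

theorem offDiag_eq_filter_product (s : Finset α) : s.offDiag = {q ∈ s ×ˢ s | q.1 ≠ q.2} := by
  ext
  simp [mem_offDiag, and_assoc]

theorem prod_offDiag_fst {M : Type*} [CommMonoid M] (s : Finset α) (f : α → M) :
    ∏ q ∈ s.offDiag, f q.1 = ∏ i ∈ s, f i ^ (#s - 1) := by
  rw [offDiag_eq_filter_product, prod_filter, prod_product]
  refine prod_congr rfl fun i hi => ?_
  simp only [← prod_filter, filter_ne, prod_const, card_erase_of_mem hi]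

theorem prod_offDiag_snd {M : Type*} [CommMonoid M] (s : Finset α) (f : α → M) :
    ∏ q ∈ s.offDiag, f q.2 = ∏ i ∈ s, f i ^ (#s - 1) := by
  rw [offDiag_eq_filter_product, prod_filter, prod_product_right]
  refine prod_congr rfl fun i hi => ?_
  simp only [← prod_filter, filter_ne', prod_const, card_erase_of_mem hi]

theorem prod_offDiag_mul {M : Type*} [CommMonoid M] (s : Finset α) (f : α → M) :
    ∏ q ∈ s.offDiag, f q.1 * f q.2 = (∏ i ∈ s, f i) ^ (2 * (#s - 1)) := by
  rw [prod_mul_distrib, prod_offDiag_fst, prod_offDiag_snd, prod_pow, ← pow_add, two_mul]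

theorem sq_sum_eq_sum_sq_add_sum_offDiag {R : Type*} [CommSemiring R] (s : Finset α)
    (f : α → R) :
    (∑ i ∈ s, f i) ^ 2 = ∑ i ∈ s, f i ^ 2 + ∑ q ∈ s.offDiag, f q.1 * f q.2 := by
  rw [sq, sum_mul_sum, ← sum_product', ← diag_union_offDiag,
    sum_union (disjoint_diag_offDiag _), sum_diag]
  simp only [sq]

theorem card_mul_card_sub_one_mul_prod_rpow_le_sum_offDiag (s : Finset α) {a : α → ℝ}
    (ha : ∀ i ∈ s, 0 ≤ a i) :
    (#s : ℝ) * (#s - 1) * (∏ i ∈ s, a i) ^ ((2 : ℝ) / #s) ≤ ∑ q ∈ s.offDiag, a q.1 * a q.2 := by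
  have hz : ∀ q ∈ s.offDiag, 0 ≤ a q.1 * a q.2 := fun q hq =>
    mul_nonneg (ha _ (mem_offDiag.1 hq).1) (ha _ (mem_offDiag.1 hq).2.1)
  rcases lt_or_ge #s 2 with hs | hs
  · have hN : (#s : ℝ) * (#s - 1) = 0 := by
      rcases (by omega : #s = 0 ∨ #s = 1) with h | h <;> simp [h]
    rw [hN, zero_mul]
    exact sum_nonneg hz
  have hs' : (2 : ℝ) ≤ #s := by exact_mod_cast hs
  have hN : 0 < (#s : ℝ) * (#s - 1) := by nlinarith
  have hcard : (#s.offDiag : ℝ) = #s * (#s - 1) := by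
    rw [offDiag_card, Nat.cast_sub (Nat.le_mul_self _)]
    push_cast
    ring
  have hamgm := Real.geom_mean_le_arith_mean s.offDiag (fun _ => 1) _ (fun _ _ => zero_le_one)
    (by rw [sum_const, nsmul_one, hcard]; exact hN) hz
  simp only [Real.rpow_one, one_mul, sum_const, nsmul_eq_mul, mul_one, hcard,
    prod_offDiag_mul] at hamgm
  rw [← le_div_iff₀' hN]
  refine le_of_eq_of_le ?_ hamgm
  rw [← Real.rpow_natCast_mul (prod_nonneg ha)]
  congr 1
  have hs₀ : (#s : ℝ) ≠ 0 := by positivity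
  have hs₁ : (#s : ℝ) - 1 ≠ 0 := by linarith
  rw [Nat.cast_mul, Nat.cast_sub (by omega)]
  field_simp
  ring

theorem sum_sq_add_card_mul_card_sub_one_mul_prod_rpow_le_sq_sum (s : Finset α) {a : α → ℝ}
    (ha : ∀ i ∈ s, 0 ≤ a i) :
    ∑ i ∈ s, a i ^ 2 + #s * (#s - 1) * (∏ i ∈ s, a i) ^ ((2 : ℝ) / #s) ≤ (∑ i ∈ s, a i) ^ 2 := by
  rw [sq_sum_eq_sum_sq_add_sum_offDiag]
  gcongr
  exact card_mul_card_sub_one_mul_prod_rpow_le_sum_offDiag s ha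

theorem sqrt_sum_sq_add_card_mul_card_sub_one_mul_prod_abs_rpow_le_sum_abs (s : Finset α)
    (x : α → ℝ) :
    √(∑ i ∈ s, x i ^ 2 + #s * (#s - 1) * (∏ i ∈ s, |x i|) ^ ((2 : ℝ) / #s)) ≤
      ∑ i ∈ s, |x i| := by
  rw [Real.sqrt_le_left (sum_nonneg fun i _ => abs_nonneg (x i))]
  simpa only [sq_abs] using
    sum_sq_add_card_mul_card_sub_one_mul_prod_rpow_le_sq_sum s fun i _ => abs_nonneg (x i)

end Finset

namespace Matrix.IsHermitian

variable {𝕜 n : Type*} [RCLike 𝕜] [Fintype n] [DecidableEq n] {A : Matrix n n 𝕜}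

theorem trace_mul_self (hA : A.IsHermitian) :
    (A * A).trace = ∑ i, (hA.eigenvalues i : 𝕜) ^ 2 := by
  conv_lhs => rw [hA.spectral_theorem, ← map_mul, Unitary.conjStarAlgAut_apply, trace_mul_cycle,
    Unitary.coe_star_mul_self, one_mul, diagonal_mul_diagonal, trace_diagonal]
  simp [sq]

theorem sum_sq_eigenvalues (hA : A.IsHermitian) :
    ∑ i, hA.eigenvalues i ^ 2 = ∑ k, ∑ l, ‖A k l‖ ^ 2 := by
  apply RCLike.ofReal_injective (K := 𝕜)
  push_cast
  simp only [← hA.trace_mul_self, trace, diag_apply, mul_apply]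
  refine sum_congr rfl fun k _ => sum_congr rfl fun l _ => ?_
  rw [← hA.apply l k, RCLike.star_def, RCLike.mul_conj]

theorem norm_det (hA : A.IsHermitian) : ‖A.det‖ = ∏ i, |hA.eigenvalues i| := by
  simp [hA.det_eq_prod_eigenvalues, norm_prod]

end Matrix.IsHermitian

namespace MixedGraph

variable {V : Type} [Fintype V] [DecidableEq V]

theorem norm_RH_sq (M : MixedGraph V) (k l : V) :
    ‖M.RH k l‖ ^ 2 = if M.h k l ≠ 0 then ((M.deg k : ℝ) * (M.deg l : ℝ))⁻¹ else 0 := by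
  by_cases h : M.h k l = 0
  · simp [RH, h]
  have hnorm : ‖M.h k l‖ = 1 := by
    rcases M.entries k l with h0 | h1 | hi | hi <;> simp_all
  rw [if_pos h, RH, norm_div, hnorm, Complex.norm_real, Real.norm_eq_abs, div_pow, sq_abs,
    mul_pow, Real.sq_sqrt (Nat.cast_nonneg _), Real.sq_sqrt (Nat.cast_nonneg _), one_pow, one_div]

theorem sum_sq_eigenvalues_RH (M : MixedGraph V) :
    ∑ i, M.RH_isHermitian.eigenvalues i ^ 2 = 2 * M.Rm1 := by
  simp only [M.RH_isHermitian.sum_sq_eigenvalues, norm_RH_sq, Rm1]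
  ring

end MixedGraph

/-- with `p = |det R_H(M)|`,
`√(2R₋₁(M_U) + n(n-1)p^{2/n}) ≤ E_{R_H}(M) ≤ √(2n R₋₁(M_U))`. -/
theorem energyRH_bounds {V : Type} [Fintype V] [DecidableEq V] (M : MixedGraph V) :
    Real.sqrt (2 * M.Rm1 + (Fintype.card V : ℝ) * ((Fintype.card V : ℝ) - 1) *
        ‖M.RH.det‖ ^ ((2 : ℝ) / (Fintype.card V : ℝ))) ≤ M.energyRH ∧
      M.energyRH ≤ Real.sqrt (2 * (Fintype.card V : ℝ) * M.Rm1) := by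
  have hsq := M.sum_sq_eigenvalues_RH
  have hlower := sqrt_sum_sq_add_card_mul_card_sub_one_mul_prod_abs_rpow_le_sum_abs univ
    M.RH_isHermitian.eigenvalues
  have hupper := sum_abs_le_sqrt_card_mul_sum_sq univ M.RH_isHermitian.eigenvalues
  rw [hsq, ← M.RH_isHermitian.norm_det, card_univ] at hlower
  rw [hsq, card_univ, mul_left_comm, ← mul_assoc] at hupper
  exact ⟨hlower, hupper⟩
end
end

section
/- If M is a positive mixed graph (every mixed cycle of M has positive value) with underlying graph M_U, then R_H(M) and R(M_U) have the same spectrum, where R(M_U) is the Randić matrix of M_U. -/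
open Matrix BigOperators

noncomputable section
open scoped Classical

/-- The Randić matrix of a simple graph (over ℂ, with real entries). -/
def randicMatrix {V : Type} [Fintype V] [DecidableEq V] (G : SimpleGraph V) :
    Matrix V V ℂ :=
  fun k l => if G.Adj k l
    then ((Real.sqrt (G.degree k) * Real.sqrt (G.degree l) : ℝ) : ℂ)⁻¹ else 0

theorem randicMatrix_isHermitian {V : Type} [Fintype V] [DecidableEq V]
    (G : SimpleGraph V) : (randicMatrix G).IsHermitian := by
  ext k l
  simp only [randicMatrix, Matrix.conjTranspose_apply]
  by_cases h : G.Adj k l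
  · rw [if_pos h, if_pos h.symm, mul_comm (Real.sqrt (G.degree l))]
    simp [← Complex.ofReal_inv]
  · rw [if_neg (fun hh : G.Adj l k => h hh.symm), if_neg h, star_zero]

/-- The Randić energy of a simple graph. -/
def randicEnergy {V : Type} [Fintype V] [DecidableEq V] (G : SimpleGraph V) : ℝ :=
  ∑ i, |(randicMatrix_isHermitian G).eigenvalues i|

/-- The value of a list of vertices: the product of the corresponding
Hermitian–Randić matrix entries along consecutive pairs. -/
def MixedGraph.listValue {V : Type} [Fintype V] [DecidableEq V]
    (M : MixedGraph V) : List V → ℂ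
  | [] => 1
  | [_] => 1
  | a :: b :: rest => M.RH a b * M.listValue (b :: rest)

/-!
Write `gain f p` for the product of `f k l` over the edges `k → l` of a walk `p`. On an edge the
entries of `H(M)` satisfy `h_kl h_lk = |h_kl|² = 1`. Along a closed walk the degree factors of
`R_H(M)` contribute exactly `∏ 1/d(v)`, so positivity says that every cycle has `H`-gain `1`.
Shortcutting a closed walk (`Walk.bypass`) only removes closed subwalks of the form edge + path,
which are single back-and-forth edges or cycles, so every closed walk has gain `1` and gains are
path independent. Fixing a root in each component and letting `θ v` be the gain from the root
to `v` gives `h_kl = θ_k⁻¹ θ_l`, i.e. `R_H(M) = D⁻¹ R(M_U) D` with `D = diag θ`.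
-/

namespace SimpleGraph.Walk

variable {V α : Type*} [CommMonoid α] {G : SimpleGraph V} {u v : V}

def gain (f : V → V → α) (p : G.Walk u v) : α :=
  (p.darts.map fun d => f d.fst d.snd).prod

section

variable (f : V → V → α)

@[simp] lemma gain_nil : (nil : G.Walk u u).gain f = 1 := rfl

@[simp] lemma gain_cons {w : V} (h : G.Adj u v) (p : G.Walk v w) :
    (cons h p).gain f = f u v * p.gain f := rfl

@[simp] lemma gain_append {w : V} (p : G.Walk u v) (q : G.Walk v w) :
    (p.append q).gain f = p.gain f * q.gain f := by
  simp [gain]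

@[simp] lemma gain_copy {u' v' : V} (p : G.Walk u v) (hu : u = u') (hv : v = v') :
    (p.copy hu hv).gain f = p.gain f := by
  simp [gain]

lemma gain_weight_of_closed (w : V → α) (c : G.Walk u u) :
    c.gain (fun k l => f k l * (w k * w l)) =
      c.gain f * (c.support.tail.map fun x => w x ^ 2).prod := by
  have hfst : ((c.darts.map (·.fst)).map w).prod = (c.support.tail.map w).prod := by
    rw [map_fst_darts]
    exact (c.tail_support_perm_dropLast_support.map w).prod_eq.symm
  have hsnd : ((c.darts.map (·.snd)).map w).prod = (c.support.tail.map w).prod := by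
    rw [map_snd_darts]
  simp only [List.map_map, Function.comp_def] at hfst hsnd
  simp only [gain, sq, List.prod_map_mul, hfst, hsnd]

end

variable {f : V → V → α}

lemma gain_mul_gain_reverse (hf : ∀ k l, G.Adj k l → f k l * f l k = 1) (p : G.Walk u v) :
    p.gain f * p.reverse.gain f = 1 := by
  induction p with
  | nil => simp
  | @cons a b _ h p ih =>
    simp only [reverse_cons, gain_cons, gain_append, gain_nil]
    rw [mul_one, mul_comm (p.reverse.gain f), mul_mul_mul_comm, hf a b h, ih, one_mul]

lemma IsPath.eq_cons_nil_of_not_isCycle_cons {h : G.Adj u v} {q : G.Walk v u} (hq : q.IsPath)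
    (hc : ¬(cons h q).IsCycle) : q = cons h.symm Walk.nil := by
  have he : s(u, v) ∈ q.edges := by
    by_contra he
    exact hc ((cons_isCycle_iff q h).2 ⟨hq, he⟩)
  cases q with
  | nil => exact absurd h G.irrefl
  | cons h' r =>
    rw [cons_isPath_iff] at hq
    rw [edges_cons, List.mem_cons] at he
    rcases he with he | he
    · obtain rfl : u = _ := by
        rcases Sym2.eq_iff.1 he with ⟨huv, -⟩ | ⟨huw, -⟩
        · exact absurd huv h.ne
        · exact huw
      rw [eq_nil_iff_nil.2 (isPath_iff_nil.1 hq.1)]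
    · exact absurd (r.snd_mem_support_of_mem_edges he) hq.2

section Balanced

variable (hf : ∀ k l, G.Adj k l → f k l * f l k = 1)
  (hcyc : ∀ (x : V) (c : G.Walk x x), c.IsCycle → c.gain f = 1)
include hf hcyc

lemma gain_cons_eq_one_of_isPath (h : G.Adj u v) {q : G.Walk v u} (hq : q.IsPath) :
    (cons h q).gain f = 1 := by
  by_cases hc : (cons h q).IsCycle
  · exact hcyc _ _ hc
  · rw [hq.eq_cons_nil_of_not_isCycle_cons hc, gain_cons, gain_cons, gain_nil, mul_one, hf u v h]

lemma gain_bypass (p : G.Walk u v) : p.bypass.gain f = p.gain f := by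
  induction p with
  | nil => rfl
  | @cons a b _ h p ih =>
    simp only [bypass]
    split_ifs with hs
    · have hsplit := congrArg (gain f) (p.bypass.take_spec hs)
      rw [gain_append] at hsplit
      rw [gain_cons, ← ih, ← hsplit, ← mul_assoc, ← gain_cons f h,
        gain_cons_eq_one_of_isPath hf hcyc h (p.bypass_isPath.takeUntil hs), one_mul]
    · rw [gain_cons, gain_cons, ih]

lemma gain_eq_one_of_closed (c : G.Walk u u) : c.gain f = 1 := by
  rw [← gain_bypass hf hcyc, eq_nil_iff_nil.2 (isPath_iff_nil.1 c.bypass_isPath), gain_nil]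

lemma gain_eq_gain (p q : G.Walk u v) : p.gain f = q.gain f := by
  have hpq : p.gain f * q.reverse.gain f = 1 := by
    rw [← gain_append, gain_eq_one_of_closed hf hcyc]
  calc p.gain f = p.gain f * (q.gain f * q.reverse.gain f) := by
        rw [gain_mul_gain_reverse hf, mul_one]
    _ = q.gain f := by rw [mul_left_comm, hpq, mul_one]

end Balanced

end SimpleGraph.Walk

namespace SimpleGraph

open Walk

variable {V α : Type*} [CommMonoid α] {G : SimpleGraph V} {f : V → V → α}

/-- `θ v` is the gain of a walk from a fixed root of the component of `v` to `v`; balance makes it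
independent of the walk. -/
lemma exists_units_switching (hf : ∀ k l, G.Adj k l → f k l * f l k = 1)
    (hcyc : ∀ (x : V) (c : G.Walk x x), c.IsCycle → c.gain f = 1) :
    ∃ θ : V → αˣ, ∀ k l, G.Adj k l → f k l = ↑(θ k)⁻¹ * θ l := by
  have hreach (v : V) : G.Reachable (G.connectedComponentMk v).out v :=
    ConnectedComponent.exact (Quot.out_eq _)
  let w (v : V) : G.Walk (G.connectedComponentMk v).out v := (hreach v).some
  refine ⟨fun v => Units.mkOfMulEqOne _ _ (gain_mul_gain_reverse hf (w v)), fun k l hkl => ?_⟩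
  have hroot : (G.connectedComponentMk k).out = (G.connectedComponentMk l).out := by
    rw [ConnectedComponent.sound hkl.reachable]
  have hl : (w l).gain f = (w k).gain f * f k l := by
    rw [gain_eq_gain hf hcyc (w l) (((w k).copy hroot rfl).concat hkl), concat, gain_append,
      gain_copy, gain_cons, gain_nil, mul_one]
  rw [eq_comm, Units.inv_mul_eq_iff_eq_mul, Units.val_mkOfMulEqOne, Units.val_mkOfMulEqOne, hl]

end SimpleGraph

namespace Matrix

lemma charpoly_diagonal_units_conj {n R : Type*} [Fintype n] [DecidableEq n] [CommRing R]
    (θ : n → Rˣ) (A : Matrix n n R) :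
    (diagonal (fun i => (↑(θ i)⁻¹ : R)) * A * diagonal (fun i => (θ i : R))).charpoly =
      A.charpoly := by
  rw [charpoly_mul_comm, ← mul_assoc, diagonal_mul_diagonal]
  simp

end Matrix

namespace MixedGraph

open SimpleGraph Walk

variable {V : Type} [Fintype V] [DecidableEq V] (M : MixedGraph V)

lemma h_mul_h_swap {k l : V} (hkl : M.underlying.Adj k l) : M.h k l * M.h l k = 1 := by
  rw [← M.herm.apply l k]
  rcases M.entries k l with h0 | h1 | hi | hi
  · exact absurd h0 hkl
  all_goals simp [*]

lemma degree_underlying (k : V) : M.underlying.degree k = M.deg k := by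
  rw [← card_neighborFinset_eq_degree, deg]
  congr 1
  ext l
  simp only [mem_neighborFinset, Finset.mem_filter, Finset.mem_univ, true_and]
  rfl

lemma deg_ne_zero_of_adj {k l : V} (hkl : M.underlying.Adj k l) : M.deg l ≠ 0 :=
  Finset.card_ne_zero_of_mem (Finset.mem_filter.2 ⟨Finset.mem_univ k, hkl.symm⟩)

lemma listValue_support {G : SimpleGraph V} {u v : V} (p : G.Walk u v) :
    M.listValue p.support = p.gain M.RH := by
  induction p with
  | nil => rfl
  | cons h p ih =>
    rw [support_cons, ← p.cons_tail_support, listValue, p.cons_tail_support, ih]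
    rfl

lemma RH_eq_mul :
    M.RH = fun k l =>
      M.h k l * (((√(M.deg k) : ℝ) : ℂ)⁻¹ * ((√(M.deg l) : ℝ) : ℂ)⁻¹) := by
  ext k l
  rw [RH, div_eq_mul_inv, Complex.ofReal_mul, mul_inv]

def IsPositive : Prop :=
  ∀ (v : V) (w : M.underlying.Walk v v), w.IsCycle →
    M.listValue w.support = (w.support.tail.map fun x => ((M.deg x : ℂ))⁻¹).prod

variable {M}

lemma IsPositive.gain_eq_one (hM : M.IsPositive) {v : V} {c : M.underlying.Walk v v}
    (hc : c.IsCycle) : c.gain M.h = 1 := by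
  have hvalue := hM v c hc
  have hsqrt (x : V) : ((√(M.deg x) : ℝ) : ℂ)⁻¹ ^ 2 = ((M.deg x : ℂ))⁻¹ := by
    rw [inv_pow, ← Complex.ofReal_pow, Real.sq_sqrt (Nat.cast_nonneg _), Complex.ofReal_natCast]
  rw [listValue_support, RH_eq_mul, gain_weight_of_closed (M.h : V → V → ℂ)] at hvalue
  simp only [hsqrt] at hvalue
  refine mul_right_cancel₀ ?_ (hvalue.trans (one_mul _).symm)
  refine List.prod_ne_zero ?_
  rw [← map_snd_darts, List.map_map]
  simp only [List.mem_map, Function.comp_apply, not_exists, not_and, inv_eq_zero, Nat.cast_eq_zero]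
  exact fun d _ => M.deg_ne_zero_of_adj d.adj

lemma RH_eq_diagonal_mul {θ : V → ℂˣ}
    (hθ : ∀ k l, M.underlying.Adj k l → M.h k l = ↑(θ k)⁻¹ * θ l) :
    M.RH = diagonal (fun v => (↑(θ v)⁻¹ : ℂ)) * randicMatrix M.underlying *
      diagonal (fun v => (θ v : ℂ)) := by
  ext k l
  simp only [mul_diagonal, diagonal_mul, RH, randicMatrix, degree_underlying]
  by_cases hkl : M.underlying.Adj k l
  · rw [if_pos hkl, hθ k l hkl]
    ring
  · rw [if_neg hkl, not_not.1 hkl, zero_div, mul_zero, zero_mul]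

end MixedGraph

/-- if every mixed cycle of `M` is positive (its value equals
`∏_{v ∈ V(C)} 1/d(v)`), then `R_H(M)` and the Randić matrix of the underlying
graph have the same spectrum (equal characteristic polynomials). -/
theorem charpoly_RH_eq_of_positive {V : Type} [Fintype V] [DecidableEq V]
    (M : MixedGraph V)
    (hpos : ∀ (v : V) (w : M.underlying.Walk v v), w.IsCycle →
      M.listValue w.support =
        (w.support.tail.map fun x => ((M.deg x : ℂ))⁻¹).prod) :
    M.RH.charpoly = (randicMatrix M.underlying).charpoly := by
  have hM : M.IsPositive := hpos
  obtain ⟨θ, hθ⟩ := M.underlying.exists_units_switching (fun _ _ => M.h_mul_h_swap)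
    (fun _ _ => hM.gain_eq_one)
  rw [M.RH_eq_diagonal_mul hθ, Matrix.charpoly_diagonal_units_conj]
end
end
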